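/- Every even lattice Λ of rank two with even determinant and signature (1,1) admits a primitive embedding into the lattice Σ_r = ⟨2⟩ ⊕ ⟨-2⟩^r for some positive integer r ≤ 6. -/

import Mathlib

/-!
The determinant being negative, the form takes a negative value on some primitive vector of `Λ`,
which completes to a basis `(e, f)`; evenness of the lattice and of its determinant makes all
values of `B` even, so the Gram matrix in this basis is `2 [[a, c], [c, b]]` with `b < 0`.
In `Σ_6` the vectors `u = (1 + α + x, 1 + x, α + x, 0, 0, 0, 0)` and
`v = (c + x + 1, 1, c + x + 1, z)`, where `x ∈ {0, 1}`, `2α - x = a` and `|z|² = -1 - b`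
(Lagrange's four-square theorem), have the same Gram matrix, and
`y ↦ (y₀ - y₂, y₁ - (1 + x)(y₀ - y₂))` retracts `ℤ⁷` onto their span. Hence `e ↦ u, f ↦ v` is a primitive embedding.
-/

def sigmaForm (r : ℕ) : LinearMap.BilinForm ℤ (Fin (r + 1) → ℤ) :=
  Matrix.toLinearMap₂' ℤ (Matrix.diagonal (Fin.cons 2 fun _ => -2))

theorem sigmaForm_apply (r : ℕ) (v w : Fin (r + 1) → ℤ) :
    sigmaForm r v w = 2 * v 0 * w 0 - 2 * ∑ i : Fin r, v i.succ * w i.succ := by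
  simp only [sigmaForm, Matrix.toLinearMap₂'_apply', Matrix.mulVec_diagonal, dotProduct,
    Fin.sum_univ_succ, Fin.cons_zero, Fin.cons_succ]
  rw [sub_eq_add_neg, Finset.mul_sum, ← Finset.sum_neg_distrib]
  congr 1
  · ring
  · exact Finset.sum_congr rfl fun _ _ => by ring

theorem sigmaForm_comm (r : ℕ) (v w : Fin (r + 1) → ℤ) : sigmaForm r v w = sigmaForm r w v := by
  simp only [sigmaForm_apply, mul_comm]
  ring

structure IsPrimitiveEmbedding {R M N : Type*} [CommRing R] [AddCommGroup M] [Module R M]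
    [AddCommGroup N] [Module R N] (B : M →ₗ[R] M →ₗ[R] R) (Q : N →ₗ[R] N →ₗ[R] R)
    (σ : M →ₗ[R] N) : Prop where
  injective : Function.Injective σ
  map_apply : ∀ x y, Q (σ x) (σ y) = B x y
  mem_range_of_smul_mem_range : ∀ (y : N) (n : R), n ≠ 0 →
    n • y ∈ LinearMap.range σ → y ∈ LinearMap.range σ

section Embedding

variable {R M N : Type*} [CommRing R] [IsDomain R] [AddCommGroup M] [Module R M]
  [AddCommGroup N] [Module R N] [Module.IsTorsionFree R N]

theorem mem_range_of_smul_mem_range_of_leftInverse {σ : M →ₗ[R] N} {π : N →ₗ[R] M}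
    (h : Function.LeftInverse π σ) {y : N} {n : R} (hn : n ≠ 0)
    (hy : n • y ∈ LinearMap.range σ) : y ∈ LinearMap.range σ := by
  obtain ⟨x, hx⟩ := hy
  refine ⟨π y, smul_right_injective N hn ?_⟩
  dsimp only
  rw [← map_smul, ← map_smul, ← hx, h x]

theorem exists_isPrimitiveEmbedding_of_retraction {ι : Type*} [Fintype ι] [DecidableEq ι]
    (B : M →ₗ[R] M →ₗ[R] R) (Q : N →ₗ[R] N →ₗ[R] R) (b : Module.Basis ι R M) (w : ι → N)
    (hw : ∀ i j, Q (w i) (w j) = B (b i) (b j))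
    (π : N →ₗ[R] ι → R) (hπ : ∀ i, π (w i) = Pi.single i 1) :
    ∃ σ : M →ₗ[R] N, IsPrimitiveEmbedding B Q σ := by
  set σ := b.constr R w
  have hσ : ∀ i, σ (b i) = w i := b.constr_basis R w
  have hretract : (b.equivFun.symm.toLinearMap ∘ₗ π) ∘ₗ σ = LinearMap.id :=
    b.ext fun i => by simp [hσ, hπ]
  have hleft : Function.LeftInverse (b.equivFun.symm.toLinearMap ∘ₗ π) σ :=
    LinearMap.congr_fun hretract
  have hiso : Q.compl₁₂ σ σ = B := LinearMap.ext_basis b b fun i j => by simp [hσ, hw]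
  exact ⟨σ, hleft.injective, fun x y => by rw [← hiso]; rfl,
    fun y n hn => mem_range_of_smul_mem_range_of_leftInverse hleft hn⟩

end Embedding

theorem even_apply_of_even_basis {ι M : Type*} [AddCommGroup M] [Module ℤ M]
    (B : M →ₗ[ℤ] M →ₗ[ℤ] ℤ) (b : Module.Basis ι ℤ M) (h : ∀ i j, Even (B (b i) (b j)))
    (x y : M) : Even (B x y) := by
  rw [← LinearMap.sum_repr_mul_repr_mul b b x y]
  exact Finset.even_sum _ fun i _ => Finset.even_sum _ fun j _ => by
    simpa only [smul_eq_mul] using ((h i j).mul_left _).mul_left _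

theorem exists_isCoprime_of_neg {A C D p q : ℤ}
    (h : A * p ^ 2 + 2 * C * p * q + D * q ^ 2 < 0) :
    ∃ p' q' : ℤ, IsCoprime p' q' ∧ A * p' ^ 2 + 2 * C * p' * q' + D * q' ^ 2 < 0 := by
  have hpq : 0 < Int.gcd p q := Int.gcd_pos_iff.mpr (by by_contra! h0; simp_all)
  obtain ⟨g, p', q', hg, hcop, rfl, rfl⟩ := Int.exists_gcd_one' hpq
  refine ⟨p', q', Int.isCoprime_iff_gcd_eq_one.mpr hcop, ?_⟩
  have hg2 : (0 : ℤ) < (g : ℤ) ^ 2 := by positivity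
  nlinarith

theorem exists_isCoprime_neg_of_mul_lt_sq {A C D : ℤ} (h : A * D < C ^ 2) :
    ∃ p q : ℤ, IsCoprime p q ∧ A * p ^ 2 + 2 * C * p * q + D * q ^ 2 < 0 := by
  suffices ∃ p q : ℤ, A * p ^ 2 + 2 * C * p * q + D * q ^ 2 < 0 by
    obtain ⟨p, q, hneg⟩ := this
    exact exists_isCoprime_of_neg hneg
  rcases lt_trichotomy A 0 with hA | rfl | hA
  · exact ⟨1, 0, by linarith⟩
  -- the value at `(-C (D² + 1), 1)` is `D - 2 C² (D² + 1)`, and `C ≠ 0`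
  · refine ⟨-C * (D ^ 2 + 1), 1, ?_⟩
    have hC : 1 ≤ C ^ 2 := by linarith
    nlinarith [sq_nonneg (D - 1)]
  -- the value at `(-C, A)` is `A (A D - C²)`
  · exact ⟨-C, A, by nlinarith⟩

theorem exists_basis_eq_of_isCoprime {R M : Type*} [CommRing R] [AddCommGroup M] [Module R M]
    (b : Module.Basis (Fin 2) R M) {p q : R} (h : IsCoprime p q) :
    ∃ b' : Module.Basis (Fin 2) R M, b' 1 = p • b 0 + q • b 1 := by
  obtain ⟨g, -, hg⟩ := ModularGroup.bottom_row_surj (R := R) (a := ![p, q]) (by simpa using h)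
  refine ⟨b.map (Matrix.toLinearEquiv b (g : Matrix (Fin 2) (Fin 2) R).transpose (by simp)), ?_⟩
  simp [Matrix.toLin_self, Fin.sum_univ_two, hg]

theorem exists_sum_four_sq_of_nonneg {n : ℤ} (hn : 0 ≤ n) :
    ∃ a b c d : ℤ, a ^ 2 + b ^ 2 + c ^ 2 + d ^ 2 = n := by
  obtain ⟨a, b, c, d, h⟩ := Nat.sum_four_squares n.toNat
  exact ⟨a, b, c, d, by rw [← Int.toNat_of_nonneg hn, ← h]; push_cast; ring⟩

theorem exists_two_mul_sub_sq_eq (a : ℤ) : ∃ α x : ℤ, x ^ 2 = x ∧ 2 * α - x = a := by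
  rcases Int.even_or_odd' a with ⟨k, rfl | rfl⟩
  · exact ⟨k, 0, by ring, by ring⟩
  · exact ⟨k + 1, 1, by ring, by ring⟩

theorem exists_sigmaForm_six_realization {A C D : ℤ} (hA : Even A) (hC : Even C) (hD : Even D)
    (hD0 : D < 0) :
    ∃ u v : Fin 7 → ℤ, sigmaForm 6 u u = A ∧ sigmaForm 6 u v = C ∧ sigmaForm 6 v v = D ∧
      ∃ π : (Fin 7 → ℤ) →ₗ[ℤ] Fin 2 → ℤ, π u = Pi.single 0 1 ∧ π v = Pi.single 1 1 := by
  obtain ⟨a, rfl⟩ := hA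
  obtain ⟨c, rfl⟩ := hC
  obtain ⟨d, rfl⟩ := hD
  obtain ⟨α, x, hx, hα⟩ := exists_two_mul_sub_sq_eq a
  obtain ⟨z₁, z₂, z₃, z₄, hz⟩ := exists_sum_four_sq_of_nonneg (show 0 ≤ -1 - d by omega)
  set ξ : (Fin 7 → ℤ) →ₗ[ℤ] ℤ :=
    LinearMap.proj (R := ℤ) (φ := fun _ : Fin 7 => ℤ) 0 - LinearMap.proj 2
  refine ⟨![1 + α + x, 1 + x, α + x, 0, 0, 0, 0], ![c + x + 1, 1, c + x + 1, z₁, z₂, z₃, z₄],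
    ?_, ?_, ?_, LinearMap.pi ![ξ, LinearMap.proj 1 - (1 + x) • ξ], ?_, ?_⟩
  any_goals simp only [sigmaForm_apply, Fin.sum_univ_six, Matrix.cons_val_zero,
    Matrix.cons_val_succ, Matrix.cons_val_one, Matrix.cons_val]
  · linear_combination 2 * hα - 2 * hx
  · ring
  · linear_combination -2 * hz
  · ext i; fin_cases i <;> simp [ξ]
  · ext i; fin_cases i <;> simp [ξ]

theorem stmt_7 (Λ : Type*) [AddCommGroup Λ] [Module ℤ Λ]
    (B : Λ →ₗ[ℤ] Λ →ₗ[ℤ] ℤ)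
    (hsymm : ∀ x y, B x y = B y x)
    (heven : ∀ x, Even (B x x))
    (bas : Module.Basis (Fin 2) ℤ Λ)
    (hsig : B (bas 0) (bas 0) * B (bas 1) (bas 1) - (B (bas 0) (bas 1)) ^ 2 < 0)
    (hdet : Even (B (bas 0) (bas 0) * B (bas 1) (bas 1) - (B (bas 0) (bas 1)) ^ 2)) :
    ∃ r : ℕ, 0 < r ∧ r ≤ 6 ∧
      ∃ σ : Λ →ₗ[ℤ] (Fin (r + 1) → ℤ),
        Function.Injective σ ∧
        (∀ x y, 2 * σ x 0 * σ y 0 - 2 * ∑ i : Fin r, σ x i.succ * σ y i.succ = B x y) ∧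
        (∀ (y : Fin (r + 1) → ℤ) (n : ℤ), n ≠ 0 →
          n • y ∈ LinearMap.range σ → y ∈ LinearMap.range σ) := by
  have hoff : Even (B (bas 0) (bas 1)) := by
    have hsq : Even (B (bas 0) (bas 1) ^ 2) := by
      simpa using ((heven (bas 0)).mul_right (B (bas 1) (bas 1))).sub hdet
    exact (Int.even_pow.mp hsq).1
  have hB_even : ∀ x y, Even (B x y) := even_apply_of_even_basis B bas fun i j => by
    fin_cases i <;> fin_cases j <;> simp [heven, hoff, hsymm (bas 1) (bas 0)]
  obtain ⟨p, q, hpq, hneg⟩ := exists_isCoprime_neg_of_mul_lt_sq (sub_neg.mp hsig)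
  obtain ⟨b', hb'⟩ := exists_basis_eq_of_isCoprime bas hpq
  have hf : B (b' 1) (b' 1) < 0 := by
    convert hneg using 1
    simp only [hb', map_add, map_smul, LinearMap.add_apply, LinearMap.smul_apply, smul_eq_mul,
      hsymm (bas 1) (bas 0)]
    ring
  obtain ⟨u, v, huu, huv, hvv, π, hπu, hπv⟩ := exists_sigmaForm_six_realization
    (hB_even (b' 0) (b' 0)) (hB_even (b' 0) (b' 1)) (hB_even (b' 1) (b' 1)) hf
  obtain ⟨σ, hσ⟩ := exists_isPrimitiveEmbedding_of_retraction B (sigmaForm 6) b' ![u, v]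
    (fun i j => by fin_cases i <;> fin_cases j <;> simp [huu, huv, hvv, sigmaForm_comm, hsymm])
    π (fun i => by fin_cases i <;> simp [hπu, hπv])
  exact ⟨6, by norm_num, le_rfl, σ, hσ.injective,
    fun x y => by rw [← sigmaForm_apply, hσ.map_apply], hσ.mem_range_of_smul_mem_range⟩
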